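/- If γ is a phylogenetic tree on A fixed by σ, then the induced permutation of the edges of γ decomposes into cycles whose lengths are all powers of 2, each dividing the size of the largest cycle of σ (when that size is a power of 2). -/
import Mathlib


universe u
variable {α β : Type u}

/-- Rooted binary trees with labelled leaves (embedded). -/
inductive RTree (α : Type u) : Type u
  | leaf : α → RTree α
  | node : RTree α → RTree α → RTree α

namespace RTree

def relabel (f : α → β) : RTree α → RTree β
  | .leaf a => .leaf (f a)
  | .node l r => .node (l.relabel f) (r.relabel f)

def leaves : RTree α → Multiset α
  | .leaf a => {a}
  | .node l r => l.leaves + r.leaves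

/-- Identification of non-embedded trees: the two children of a node are unordered. -/
inductive TEquiv : RTree α → RTree α → Prop
  | leaf (a : α) : TEquiv (.leaf a) (.leaf a)
  | node {l r l' r'} : TEquiv l l' → TEquiv r r' → TEquiv (.node l r) (.node l' r')
  | swap {l r l' r'} : TEquiv l r' → TEquiv r l' → TEquiv (.node l r) (.node l' r')

theorem TEquiv.leaves_eq {t t' : RTree α} (h : TEquiv t t') : t.leaves = t'.leaves := by
  induction h with
  | leaf a => rfl
  | node _ _ ih1 ih2 => simp [leaves, ih1, ih2]
  | swap _ _ ih1 ih2 => simp [leaves, ih1, ih2, add_comm]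

theorem TEquiv.relabel_congr (f : α → β) {t t' : RTree α} (h : TEquiv t t') :
    TEquiv (t.relabel f) (t'.relabel f) := by
  induction h with
  | leaf a => exact .leaf _
  | node _ _ ih1 ih2 => exact .node ih1 ih2
  | swap _ _ ih1 ih2 => exact .swap ih1 ih2

end RTree

/-- Phylogenetic (rooted, non-embedded, leaf-labelled) trees with labels in `α`. -/
def PTree (α : Type u) : Type u := Quot (@RTree.TEquiv α)

namespace PTree

def leaves : PTree α → Multiset α :=
  Quot.lift RTree.leaves fun _ _ h => h.leaves_eq

def relabel (f : α → α) : PTree α → PTree α :=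
  Quot.lift (fun t => Quot.mk _ (t.relabel f)) fun _ _ h => Quot.sound (h.relabel_congr f)

end PTree

/-- The phylogenetic trees with leaf label set `A` that are fixed by the relabelling
action of `σ`. -/
def fixedTrees (σ : Equiv.Perm α) (A : Finset α) : Set (PTree α) :=
  {t | t.leaves = A.val ∧ t.relabel σ = t}

/-- The orbit (cycle) of `a` under the permutation `σ`, as a finset. -/
noncomputable def orbitF [Fintype α] (σ : Equiv.Perm α) (a : α) : Finset α := by
  classical exact Finset.univ.filter fun x => σ.SameCycle a x

/-- `∏_{i=2}^{ℓ} (2(λ_i + ⋯ + λ_ℓ) - 1)` where the parts `λ_1 ≥ λ_2 ≥ ⋯ ≥ λ_ℓ` are the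
elements of `m` in non-increasing order: equivalently, the factors are `2 s - 1` where `s`
runs over the sums of the `j` smallest parts, `j = 1, …, ℓ - 1`. -/
def prodFormula (m : Multiset ℕ) : ℕ :=
  ∏ j ∈ Finset.range (m.card - 1), (2 * ((m.sort (· ≤ ·)).take (j + 1)).sum - 1)

/-- `z_λ = ∏_m m^{m_m} · m_m!` where `m_m` is the multiplicity of `m`. -/
def zPart (m : Multiset ℕ) : ℕ :=
  ∏ p ∈ m.toFinset, p ^ m.count p * (m.count p).factorial

/-- The leaf-label multisets of all subtrees of an (embedded representative of a)
phylogenetic tree. Since leaf labels are distinct, subtrees — equivalently the edges of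
the tree, each edge corresponding to the subtree hanging below it, the root edge
corresponding to the whole tree — are faithfully encoded by their leaf multisets. -/
def subtreeLeaves {α : Type} : RTree α → Set (Multiset α)
  | .leaf a => {{a}}
  | .node l r => insert (RTree.leaves (.node l r)) (subtreeLeaves l ∪ subtreeLeaves r)

section Aux

open Function

namespace RTree

theorem leaves_relabel (f : α → β) (t : RTree α) :
    (t.relabel f).leaves = t.leaves.map f := by
  induction t with
  | leaf a => rfl
  | node l r ihl ihr => simp [relabel, leaves, ihl, ihr]

theorem relabel_relabel (f : α → β) (g : β → β) (t : RTree α) :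
    (t.relabel f).relabel g = t.relabel (g ∘ f) := by
  induction t with
  | leaf a => rfl
  | node l r ihl ihr => simp [relabel, ihl, ihr]

theorem TEquiv.refl (t : RTree α) : TEquiv t t := by
  induction t with
  | leaf a => exact .leaf a
  | node l r ihl ihr => exact .node ihl ihr

theorem TEquiv.trans {a b c : RTree α} (h1 : TEquiv a b) (h2 : TEquiv b c) :
    TEquiv a c := by
  induction h1 generalizing c with
  | leaf a => exact h2
  | node hl hr ihl ihr =>
    cases h2 with
    | node h2l h2r => exact .node (ihl h2l) (ihr h2r)
    | swap h2l h2r => exact .swap (ihl h2l) (ihr h2r)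
  | swap hl hr ihl ihr =>
    cases h2 with
    | node h2l h2r => exact .swap (ihl h2r) (ihr h2l)
    | swap h2l h2r => exact .node (ihl h2r) (ihr h2l)

end RTree

theorem subtreeLeaves_relabel {α : Type} (f : α → α) (t : RTree α) :
    subtreeLeaves (t.relabel f) = Multiset.map f '' subtreeLeaves t := by
  induction t with
  | leaf a => simp [subtreeLeaves, RTree.relabel]
  | node l r ihl ihr =>
    simp only [subtreeLeaves, Set.image_insert_eq, Set.image_union, ihl, ihr,
      RTree.leaves, RTree.leaves_relabel, Multiset.map_add, RTree.relabel]

theorem TEquiv_subtreeLeaves_eq {α : Type} {t t' : RTree α} (h : RTree.TEquiv t t') :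
    subtreeLeaves t = subtreeLeaves t' := by
  induction h with
  | leaf a => rfl
  | @node l r l' r' h1 h2 ih1 ih2 =>
    show insert _ _ = insert _ _
    rw [ih1, ih2, (RTree.TEquiv.node h1 h2).leaves_eq]
  | @swap l r l' r' h1 h2 ih1 ih2 =>
    show insert _ _ = insert _ _
    rw [ih1, ih2, (RTree.TEquiv.swap h1 h2).leaves_eq, Set.union_comm]

theorem minimalPeriod_perm_pos {α : Type} [Fintype α] (σ : Equiv.Perm α) (a : α) :
    0 < Function.minimalPeriod ⇑σ a := by
  have h : Function.IsPeriodicPt ⇑σ (orderOf σ) a := by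
    unfold Function.IsPeriodicPt Function.IsFixedPt
    rw [Equiv.Perm.iterate_eq_pow, pow_orderOf_eq_one]
    rfl
  exact h.minimalPeriod_pos (orderOf_pos σ)

theorem orbitF_card_eq {α : Type} [Fintype α] [DecidableEq α] (σ : Equiv.Perm α) (b : α) :
    (orbitF σ b).card = Function.minimalPeriod ⇑σ b := by
  classical
  set p := Function.minimalPeriod ⇑σ b with hp
  have hppos : 0 < p := minimalPeriod_perm_pos σ b
  have : orbitF σ b = (Finset.range p).image (fun i => (σ ^ i) b) := by
    ext x
    simp only [orbitF, Finset.mem_filter, Finset.mem_univ, true_and, Finset.mem_image,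
      Finset.mem_range]
    constructor
    · intro hx
      obtain ⟨i, _, _, hi⟩ := hx.exists_pow_eq σ
      refine ⟨i % p, Nat.mod_lt _ hppos, ?_⟩
      rw [← hi, ← Equiv.Perm.iterate_eq_pow, ← Equiv.Perm.iterate_eq_pow]
      exact Function.iterate_mod_minimalPeriod_eq
    · rintro ⟨i, _, rfl⟩
      exact ⟨(i : ℤ), by simp⟩
  rw [this, Finset.card_image_of_injOn, Finset.card_range]
  intro i hi j hj hij
  simp only [Finset.coe_range, Set.mem_Iio] at hi hj
  exact Function.iterate_injOn_Iio_minimalPeriod hi hj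
    (by simpa [Equiv.Perm.iterate_eq_pow] using hij)

theorem key_pow_two {α : Type} [Fintype α] [DecidableEq α] :
    ∀ (t : RTree α) (σ : Equiv.Perm α), t.leaves.Nodup →
      RTree.TEquiv (t.relabel σ) t →
      ∀ a ∈ t.leaves, ∃ j, Function.minimalPeriod ⇑σ a = 2 ^ j := by
  intro t
  induction t with
  | leaf b =>
    intro σ _ hfix a ha
    have hb : σ b = b := by
      have := hfix.leaves_eq
      simpa [RTree.leaves, RTree.relabel] using this
    have ha' : a = b := by simpa [RTree.leaves] using ha
    refine ⟨0, ?_⟩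
    rw [pow_zero, Function.minimalPeriod_eq_one_iff_isFixedPt]
    rw [ha']; exact hb
  | node l r ihl ihr =>
    intro σ hnd hfix a ha
    have hnd' := hnd
    rw [show (RTree.node l r).leaves = l.leaves + r.leaves from rfl,
      Multiset.nodup_add] at hnd'
    obtain ⟨hndl, hndr, hdisj⟩ := hnd'
    cases hfix with
    | node h1 h2 =>
      rcases Multiset.mem_add.1 ha with h | h
      · exact ihl σ hndl h1 a h
      · exact ihr σ hndr h2 a h
    | swap h1 h2 =>
      -- h1 : TEquiv (l.relabel σ) r, h2 : TEquiv (r.relabel σ) l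
      have hlr : l.leaves.map ⇑σ = r.leaves := by
        rw [← RTree.leaves_relabel]; exact h1.leaves_eq
      have hrl : r.leaves.map ⇑σ = l.leaves := by
        rw [← RTree.leaves_relabel]; exact h2.leaves_eq
      have hl2 : RTree.TEquiv (l.relabel ⇑(σ ^ 2)) l := by
        have := (h1.relabel_congr ⇑σ).trans h2
        rwa [RTree.relabel_relabel, show ⇑σ ∘ ⇑σ = ⇑(σ ^ 2) by
          rw [pow_two, Equiv.Perm.coe_mul]] at this
      have hr2 : RTree.TEquiv (r.relabel ⇑(σ ^ 2)) r := by
        have := (h2.relabel_congr ⇑σ).trans h1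
        rwa [RTree.relabel_relabel, show ⇑σ ∘ ⇑σ = ⇑(σ ^ 2) by
          rw [pow_two, Equiv.Perm.coe_mul]] at this
      -- general argument for a in one side
      have main : ∀ (l r : RTree α), l.leaves.map ⇑σ = r.leaves →
          r.leaves.map ⇑σ = l.leaves → _root_.Disjoint l.leaves r.leaves →
          (∀ b ∈ l.leaves, ∃ j, Function.minimalPeriod ⇑(σ ^ 2) b = 2 ^ j) →
          ∀ b ∈ l.leaves, ∃ j, Function.minimalPeriod ⇑σ b = 2 ^ j := by
        intro l r hlr hrl hdisj ih b hb
        obtain ⟨j, hj⟩ := ih b hb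
        set c := Function.minimalPeriod ⇑σ b with hc
        have hcpos : 0 < c := minimalPeriod_perm_pos σ b
        have parity : ∀ n : ℕ, (Even n → (σ ^ n) b ∈ l.leaves) ∧
            (Odd n → (σ ^ n) b ∈ r.leaves) := by
          intro n
          induction n with
          | zero => exact ⟨fun _ => by simpa using hb, fun h => absurd h (by simp)⟩
          | succ n ihn =>
            rw [Nat.even_add_one, Nat.odd_add_one]
            constructor
            · intro he
              have ho : Odd n := Nat.not_even_iff_odd.mp he
              have h' := ihn.2 ho
              have hm : σ ((σ ^ n) b) ∈ r.leaves.map ⇑σ := Multiset.mem_map_of_mem _ h'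
              rw [hrl] at hm
              rwa [pow_succ', Equiv.Perm.mul_apply]
            · intro he
              have h' := ihn.1 (Nat.not_odd_iff_even.mp he)
              have hm : σ ((σ ^ n) b) ∈ l.leaves.map ⇑σ := Multiset.mem_map_of_mem _ h'
              rw [hlr] at hm
              rwa [pow_succ', Equiv.Perm.mul_apply]
        have hceven : Even c := by
          by_contra hodd
          rw [Nat.not_even_iff_odd] at hodd
          have hmem : (σ ^ c) b ∈ r.leaves := (parity c).2 hodd
          have : (σ ^ c) b = b := by
            have := Function.iterate_minimalPeriod (f := ⇑σ) (x := b)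
            rwa [Equiv.Perm.iterate_eq_pow] at this
          rw [this] at hmem
          exact Multiset.disjoint_left.mp hdisj hb hmem
        have h2 : Function.minimalPeriod ⇑(σ ^ 2) b = c / 2 := by
          rw [Equiv.Perm.coe_pow,
            Function.minimalPeriod_iterate_eq_div_gcd (by norm_num)]
          congr 1
          exact Nat.gcd_eq_right hceven.two_dvd
        refine ⟨j + 1, ?_⟩
        have : c / 2 = 2 ^ j := by rw [← h2, hj]
        have h2c : 2 ∣ c := hceven.two_dvd
        calc c = 2 * (c / 2) := by omega
        _ = 2 * 2 ^ j := by rw [this]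
        _ = 2 ^ (j + 1) := by ring
      rcases Multiset.mem_add.1 ha with h | h
      · exact main l r hlr hrl hdisj (fun b hb => ihl (σ ^ 2) hndl hl2 b hb) a h
      · exact main r l hrl hlr hdisj.symm (fun b hb => ihr (σ ^ 2) hndr hr2 b hb) a h

end Aux

/-- If γ is a phylogenetic tree on A fixed by σ whose largest cycle has
size 2^k, then σ induces a permutation of the edges of γ (encoded as subtree leaf sets),
and every edge-cycle of this permutation has length a power of 2 dividing 2^k;
equivalently the 2^k-th power of σ fixes every edge. -/
theorem stmt6 {α : Type} [Fintype α] [DecidableEq α] (σ : Equiv.Perm α)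
    (γ : RTree α) (hleaves : γ.leaves = (Finset.univ : Finset α).val)
    (hfix : RTree.TEquiv (γ.relabel σ) γ)
    (k : ℕ) (a : α) (hsize : (orbitF σ a).card = 2 ^ k)
    (hmax : ∀ b, (orbitF σ b).card ≤ 2 ^ k) :
    ∀ m ∈ subtreeLeaves γ,
      m.map ⇑σ ∈ subtreeLeaves γ ∧ m.map ⇑(σ ^ 2 ^ k) = m := by
  classical
  -- σ ^ 2 ^ k = 1
  have hpow : σ ^ 2 ^ k = 1 := by
    ext b
    have hbmem : b ∈ γ.leaves := by rw [hleaves]; exact Finset.mem_univ b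
    have hnd : γ.leaves.Nodup := by rw [hleaves]; exact Finset.univ.nodup
    obtain ⟨j, hj⟩ := key_pow_two γ σ hnd hfix b hbmem
    have hle : Function.minimalPeriod ⇑σ b ≤ 2 ^ k := by
      rw [← orbitF_card_eq]; exact hmax b
    have hjk : j ≤ k := by
      by_contra hgt
      push_neg at hgt
      have := Nat.pow_lt_pow_right (by norm_num : 1 < 2) hgt
      omega
    have hdvd : Function.minimalPeriod ⇑σ b ∣ 2 ^ k := by
      rw [hj]; exact pow_dvd_pow 2 hjk
    have h1 : Function.IsPeriodicPt ⇑σ (2 ^ k) b :=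
      Function.isPeriodicPt_iff_minimalPeriod_dvd.mpr hdvd
    unfold Function.IsPeriodicPt Function.IsFixedPt at h1
    rw [Equiv.Perm.iterate_eq_pow] at h1
    simpa using h1
  intro m hm
  constructor
  · have : subtreeLeaves γ = Multiset.map ⇑σ '' subtreeLeaves γ := by
      rw [← subtreeLeaves_relabel, TEquiv_subtreeLeaves_eq hfix]
    rw [this]
    exact ⟨m, hm, rfl⟩
  · rw [hpow]
    simp
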